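/- arXiv:1407.2293 — 3 statements merged into one kernel-verified Lean document; each statement's English description precedes it below -/
import Mathlib

section
/- Let K be a field and Λ a finite-dimensional K-algebra with Jacobson radical J. If M is a finite-dimensional left Λ-module such that dim_K (J^i·M / J^{i+1}·M) ≤ 1 for every i ≥ 0, then M is uniserial, and moreover every Λ-submodule of M equals J^i·M for some i ≥ 0. -/
open Submodule

section Aux
variable {R M : Type*} [Ring R] [AddCommGroup M] [Module R M]

/-- The Jacobson radical of a (possibly noncommutative) ring is a two-sided ideal. -/
lemma jacobson_bot_mul_mem {x : R} (hx : x ∈ Ideal.jacobson (⊥ : Ideal R)) (c : R) :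
    x * c ∈ Ideal.jacobson (⊥ : Ideal R) := by
  rw [Ideal.mem_jacobson_iff] at hx ⊢
  intro y
  obtain ⟨z, hz⟩ := hx (c * y)
  rw [Ideal.mem_bot] at hz
  have h1 := sub_eq_zero.mp hz
  refine ⟨1 - y * x * z * c, ?_⟩
  rw [Ideal.mem_bot]
  have key : (1 - y * x * z * c) * y * (x * c) + (1 - y * x * z * c) - 1
      = y * x * (1 - (z * (c * y) * x + z)) * c := by noncomm_ring
  rw [key, h1]
  noncomm_ring

lemma one_mem_one' : (1 : R) ∈ (1 : Ideal R) := by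
  rw [Submodule.one_eq_span]
  exact Submodule.mem_span_singleton_self 1

/-- Left-handed power successor for the Jacobson radical. -/
lemma jacobson_pow_succ_left (n : ℕ) :
    (Ideal.jacobson (⊥ : Ideal R)) ^ (n + 1)
      = Ideal.jacobson (⊥ : Ideal R) * (Ideal.jacobson (⊥ : Ideal R)) ^ n := by
  set I := Ideal.jacobson (⊥ : Ideal R) with hI
  have hmul1 : I * 1 = I := by
    refine le_antisymm (Submodule.mul_le.2 fun a ha b _ => jacobson_bot_mul_mem ha b)
      fun a ha => ?_
    simpa using Submodule.mul_mem_mul ha (one_mem_one' (R := R))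
  induction n with
  | zero => rw [Submodule.pow_succ, Submodule.pow_zero, Submodule.one_mul, hmul1]
  | succ n ih => rw [Submodule.pow_succ, ih, mul_assoc, ← Submodule.pow_succ, ih]

/-- The Jacobson radical kills every simple quotient: `J • ⊤ ≤ P` for coatoms `P`. -/
lemma jacobson_smul_top_le_coatom {P : Submodule R M} (hP : IsCoatom P) :
    (Ideal.jacobson (⊥ : Ideal R)) • (⊤ : Submodule R M) ≤ P := by
  rw [Submodule.smul_le]
  intro a ha x _
  by_cases hx : x ∈ P
  · exact P.smul_mem a hx
  · haveI : IsSimpleModule R (M ⧸ P) := isSimpleModule_iff_isCoatom.mpr hP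
    have hx0 : (Submodule.Quotient.mk x : M ⧸ P) ≠ 0 := by
      simpa [Submodule.Quotient.mk_eq_zero] using hx
    have hmax := IsSimpleModule.ker_toSpanSingleton_isMaximal R (M := M ⧸ P) hx0
    have hle : Ideal.jacobson (⊥ : Ideal R) ≤
        LinearMap.ker (LinearMap.toSpanSingleton R (M ⧸ P) (Submodule.Quotient.mk x)) :=
      sInf_le ⟨bot_le, hmax⟩
    have h0 : a • (Submodule.Quotient.mk x : M ⧸ P) = 0 := hle ha
    rwa [← Submodule.Quotient.mk_smul, Submodule.Quotient.mk_eq_zero] at h0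

/-- Nakayama for (possibly noncommutative) rings. -/
lemma nakayama_eq_bot (S : Submodule R M) (hfg : S.FG)
    (hS : S ≤ (Ideal.jacobson (⊥ : Ideal R)) • S) : S = ⊥ := by
  have hSeq : (Ideal.jacobson (⊥ : Ideal R)) • S = S :=
    le_antisymm (Submodule.smul_le.2 fun a _ x hx => S.smul_mem a hx) hS
  by_contra hne
  haveI : Module.Finite R ↥S := (Module.Finite.iff_fg).mpr hfg
  have htop : (Ideal.jacobson (⊥ : Ideal R)) • (⊤ : Submodule R ↥S) = ⊤ := by
    apply Submodule.map_injective_of_injective S.injective_subtype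
    rw [Submodule.map_smul'', Submodule.map_top, Submodule.range_subtype]
    exact hSeq
  have hco : IsCoatomic (Submodule R ↥S) :=
    CompleteLattice.coatomic_of_top_compact
      ((Submodule.fg_iff_compact _).mp Module.Finite.fg_top)
  rcases hco.eq_top_or_exists_le_coatom (⊥ : Submodule R ↥S) with hbot | ⟨P, hP, -⟩
  · apply hne
    rw [eq_bot_iff]
    intro x hx
    have h0 : (⟨x, hx⟩ : S) ∈ (⊥ : Submodule R ↥S) := hbot ▸ Submodule.mem_top
    have := (Submodule.mem_bot R).mp h0
    simpa using congrArg Subtype.val this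
  · exact hP.1 (top_le_iff.mp (htop ▸ jacobson_smul_top_le_coatom hP))

end Aux

/-- Let `K` be a field and `Λ` a finite-dimensional `K`-algebra with
Jacobson radical `J`.  If `M` is a finite-dimensional left `Λ`-module such that
`dim_K (J^i • M / J^(i+1) • M) ≤ 1` for every `i`, then `M` is uniserial and every
`Λ`-submodule of `M` equals `J^i • M` for some `i`. -/
theorem uniserial_of_radical_layers_small
    (K Λ : Type*) [Field K] [Ring Λ] [Algebra K Λ] [FiniteDimensional K Λ]
    (J : Ideal Λ) (hJ : J = Ideal.jacobson (⊥ : Ideal Λ))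
    (M : Type*) [AddCommGroup M] [Module K M] [Module Λ M] [IsScalarTower K Λ M]
    [FiniteDimensional K M]
    (h : ∀ i : ℕ,
      Module.finrank K
        (↥(J ^ i • ⊤ : Submodule Λ M) ⧸
          Submodule.comap (Submodule.subtype (J ^ i • ⊤ : Submodule Λ M))
            (J ^ (i + 1) • ⊤ : Submodule Λ M)) ≤ 1) :
    (∀ N N' : Submodule Λ M, N ≤ N' ∨ N' ≤ N) ∧
    (∀ N : Submodule Λ M, ∃ i : ℕ, N = (J ^ i • ⊤ : Submodule Λ M)) := by
  classical
  haveI : IsNoetherian Λ M := isNoetherian_of_tower K inferInstance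
  haveI : IsArtinian K M := inferInstance
  haveI : IsArtinian Λ M := isArtinian_of_tower K ‹IsArtinian K M›
  set T : ℕ → Submodule Λ M := fun i => (J ^ i • ⊤ : Submodule Λ M) with hT
  have hT0 : T 0 = ⊤ := by
    show (J ^ 0 • ⊤ : Submodule Λ M) = ⊤
    rw [Submodule.pow_zero]
    refine le_antisymm le_top fun x _ => ?_
    simpa using Submodule.smul_mem_smul (one_mem_one' (R := Λ)) (Submodule.mem_top (x := x))
  have hsucc : ∀ i, T (i + 1) = J • T i := by
    intro i
    show (J ^ (i + 1) • ⊤ : Submodule Λ M) = J • (J ^ i • ⊤ : Submodule Λ M)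
    rw [hJ, jacobson_pow_succ_left, ← Ideal.smul_eq_mul, Submodule.smul_assoc]
  have hanti : ∀ i, T (i + 1) ≤ T i :=
    fun i => Submodule.smul_mono_left (Ideal.pow_le_pow_right (Nat.le_succ i))
  have hantitone : Antitone T := antitone_nat_of_succ_le hanti
  -- key step
  have key : ∀ (N : Submodule Λ M) (i : ℕ), N ≤ T i → ¬ N ≤ T (i + 1) → N = T i := by
    intro N i hNle hNnle
    set P : Submodule Λ ↥(T i) := Submodule.comap (T i).subtype (T (i + 1)) with hP
    set Q : Submodule Λ ↥(T i) := Submodule.comap (T i).subtype N ⊔ P with hQ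
    have hPQ : P ≤ Q := le_sup_right
    have hdim : Module.finrank K (↥(T i) ⧸ P) ≤ 1 := h i
    haveI : Module.Finite K ↥(T i) :=
      inferInstanceAs (Module.Finite K ↥((T i).restrictScalars K))
    haveI : Module.Finite K (↥(T i) ⧸ P) :=
      Module.Finite.of_surjective ((P.mkQ).restrictScalars K) (Submodule.mkQ_surjective P)
    set W : Submodule K (↥(T i) ⧸ P) :=
      Submodule.map ((P.mkQ).restrictScalars K) (Q.restrictScalars K) with hW
    obtain ⟨x, hxN, hxT⟩ := SetLike.not_le_iff_exists.mp hNnle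
    set ξ : ↥(T i) := ⟨x, hNle hxN⟩ with hξ
    have hξQ : ξ ∈ Q := Submodule.mem_sup_left (Submodule.mem_comap.mpr (by simpa [hξ] using hxN))
    have hξP : ξ ∉ P := by simpa [hP, Submodule.mem_comap, hξ] using hxT
    have hWne : W ≠ ⊥ := by
      intro hWbot
      have hmem : P.mkQ ξ ∈ W := ⟨ξ, hξQ, rfl⟩
      rw [hWbot, Submodule.mem_bot] at hmem
      exact hξP (by simpa [Submodule.Quotient.mk_eq_zero] using hmem)
    have hWtop : W = ⊤ := by
      have h1 : Module.finrank K ↥W ≠ 0 := fun h0 => hWne (Submodule.finrank_eq_zero.mp h0)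
      have h2 : Module.finrank K ↥W ≤ Module.finrank K (↥(T i) ⧸ P) :=
        Submodule.finrank_le W
      exact Submodule.eq_top_of_finrank_eq (le_antisymm h2 (by omega))
    have hQtop : Q = ⊤ := by
      rw [eq_top_iff]
      intro ξ' _
      have hmem : P.mkQ ξ' ∈ W := hWtop ▸ Submodule.mem_top
      obtain ⟨y, hyQ, hy⟩ := hmem
      have hsub : y - ξ' ∈ P := by
        rw [← Submodule.Quotient.mk_eq_zero P]
        have h0 : P.mkQ (y - ξ') = 0 := by rw [map_sub]; rw [show P.mkQ y = P.mkQ ξ' from hy]; exact sub_self _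
        simpa using h0
      have hrw : ξ' = y - (y - ξ') := by abel
      rw [hrw]
      exact Submodule.sub_mem Q hyQ (hPQ hsub)
    have hsup : T i ≤ N ⊔ T (i + 1) := by
      intro x' hx'
      have hmem : (⟨x', hx'⟩ : ↥(T i)) ∈ Q := hQtop ▸ Submodule.mem_top
      rcases Submodule.mem_sup.mp hmem with ⟨a, ha, b, hb, hab⟩
      have hval : x' = (a : M) + (b : M) := by
        have h3 := congrArg Subtype.val hab
        simpa using h3.symm
      rw [hval]
      exact Submodule.add_mem_sup ha hb
    -- Nakayama in M ⧸ N
    have hbotmap : Submodule.map N.mkQ N = ⊥ := by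
      rw [eq_bot_iff]
      exact Submodule.map_le_iff_le_comap.mpr (le_of_eq (Submodule.ker_mkQ N).symm)
    have hS : Submodule.map N.mkQ (T i) ≤
        (Ideal.jacobson (⊥ : Ideal Λ)) • Submodule.map N.mkQ (T i) := by
      have h1 : Submodule.map N.mkQ (T i) ≤ Submodule.map N.mkQ (N ⊔ J • T i) :=
        Submodule.map_mono (by rw [← hsucc i]; exact hsup)
      have h2 : Submodule.map N.mkQ (N ⊔ J • T i)
          = J • Submodule.map N.mkQ (T i) := by
        rw [Submodule.map_sup, hbotmap, bot_sup_eq, Submodule.map_smul'']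
      rw [h2] at h1
      exact le_trans h1 (Submodule.smul_mono_left (le_of_eq hJ))
    have hmapbot : Submodule.map N.mkQ (T i) = ⊥ :=
      nakayama_eq_bot _ (IsNoetherian.noetherian _) hS
    have hTiN : T i ≤ N := by
      have h2 := Submodule.map_le_iff_le_comap.mp (le_of_eq hmapbot)
      rwa [Submodule.comap_bot, Submodule.ker_mkQ] at h2
    exact le_antisymm hNle hTiN
  -- stabilization
  obtain ⟨n, hn⟩ := IsArtinian.monotone_stabilizes
    (⟨T, fun a b hab => hantitone hab⟩ : ℕ →o (Submodule Λ M)ᵒᵈ)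
  have hTn : T n = ⊥ := by
    apply nakayama_eq_bot _ (IsNoetherian.noetherian _)
    have heq : T (n + 1) = T n := (hn (n + 1) (Nat.le_succ n)).symm
    calc T n = J • T n := by rw [← hsucc n, heq]
    _ ≤ (Ideal.jacobson (⊥ : Ideal Λ)) • T n := Submodule.smul_mono_left (le_of_eq hJ)
  have hclass : ∀ N : Submodule Λ M, ∃ i : ℕ, N = T i := by
    intro N
    by_cases hN : ∀ i, N ≤ T i
    · exact ⟨n, le_antisymm (hN n) (by rw [hTn]; exact bot_le)⟩
    · push_neg at hN
      have hi0 : ¬ N ≤ T (Nat.find hN) := Nat.find_spec hN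
      have hpos : Nat.find hN ≠ 0 := by
        intro h0
        exact hi0 (by rw [h0, hT0]; exact le_top)
      obtain ⟨j, hj⟩ : ∃ j, Nat.find hN = j + 1 :=
        ⟨Nat.find hN - 1, (Nat.succ_pred_eq_of_pos (Nat.pos_of_ne_zero hpos)).symm⟩
      have hle : N ≤ T j := by
        have hmin := Nat.find_min hN (show j < Nat.find hN by omega)
        exact not_not.mp hmin
      exact ⟨j, key N j hle (hj ▸ hi0)⟩
  refine ⟨?_, hclass⟩
  intro N N'
  obtain ⟨i, rfl⟩ := hclass N
  obtain ⟨j, rfl⟩ := hclass N'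
  rcases le_total i j with hij | hij
  · exact Or.inr (hantitone hij)
  · exact Or.inl (hantitone hij)
end

section
/- Let K be a field, Λ a finite-dimensional K-algebra, U' a nonzero finite-dimensional uniserial left Λ-module, and U a left Λ-module with dim_K U = dim_K U' such that U is not isomorphic to U'. Then every Λ-homomorphism f : U' → U vanishes on the socle soc(U') of U', and consequently composition with the canonical projection U' → U'/soc(U') induces a K-linear isomorphism Hom_Λ(U'/soc(U'), U) ≅ Hom_Λ(U', U). -/
/-- A module is uniserial if its submodules are totally ordered by inclusion. -/
def IsUniserialModule (Λ M : Type*) [Ring Λ] [AddCommGroup M] [Module Λ M] : Prop :=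
  ∀ N N' : Submodule Λ M, N ≤ N' ∨ N' ≤ N

/-- The socle of a module: the sum of all its simple submodules. -/
def Module.socle (Λ M : Type*) [Ring Λ] [AddCommGroup M] [Module Λ M] : Submodule Λ M :=
  sSup {N : Submodule Λ M | IsSimpleModule Λ ↥N}

/-- Let `U'` be a nonzero finite-dimensional uniserial left `Λ`-module
and `U` a left `Λ`-module with `dim_K U = dim_K U'` that is not isomorphic to `U'`.
Then every `Λ`-homomorphism `U' → U` vanishes on `soc U'`, and composition with the
canonical projection `U' → U'/soc U'` induces a `K`-linear isomorphism
`Hom_Λ(U'/soc U', U) ≅ Hom_Λ(U', U)`. -/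
theorem hom_vanishes_on_socle
    (K Λ : Type*) [Field K] [Ring Λ] [Algebra K Λ] [FiniteDimensional K Λ]
    (U' : Type*) [AddCommGroup U'] [Module K U'] [Module Λ U'] [IsScalarTower K Λ U']
    [FiniteDimensional K U'] [Nontrivial U'] (hU' : IsUniserialModule Λ U')
    (U : Type*) [AddCommGroup U] [Module K U] [Module Λ U] [IsScalarTower K Λ U]
    [FiniteDimensional K U]
    (hdim : Module.finrank K U = Module.finrank K U')
    (hniso : IsEmpty (U ≃ₗ[Λ] U')) :
    (∀ f : U' →ₗ[Λ] U, ∀ x ∈ Module.socle Λ U', f x = 0) ∧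
    ∃ eqv : ((U' ⧸ Module.socle Λ U') →ₗ[Λ] U) ≃ₗ[K] (U' →ₗ[Λ] U),
      ∀ g : (U' ⧸ Module.socle Λ U') →ₗ[Λ] U,
        eqv g = g ∘ₗ (Module.socle Λ U').mkQ := by
  have key : ∀ f : U' →ₗ[Λ] U, Module.socle Λ U' ≤ LinearMap.ker f := by
    intro f
    by_cases hker : LinearMap.ker f = ⊥
    · exfalso
      have hinj : Function.Injective f := LinearMap.ker_eq_bot.mp hker
      have hinjK : Function.Injective (f.restrictScalars K) := hinj
      have hsurj : Function.Surjective (f.restrictScalars K) :=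
        (LinearMap.injective_iff_surjective_of_finrank_eq_finrank hdim.symm).mp hinjK
      have hbij : Function.Bijective f := ⟨hinj, hsurj⟩
      exact hniso.elim (LinearEquiv.ofBijective f hbij).symm
    · apply sSup_le
      intro N hN
      have hatom : IsAtom N := isSimpleModule_iff_isAtom.mp hN
      rcases hU' N (LinearMap.ker f) with h | h
      · exact h
      · rcases hatom.le_iff.mp h with h' | h'
        · exact absurd h' hker
        · exact h'.ge
  refine ⟨fun f x hx => LinearMap.mem_ker.mp (key f hx), ?_⟩
  refine ⟨{ toFun := fun g => g ∘ₗ (Module.socle Λ U').mkQ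
            invFun := fun f => (Module.socle Λ U').liftQ f (key f)
            map_add' := fun g₁ g₂ => rfl
            map_smul' := fun c g => rfl
            left_inv := fun g => by
              ext x
              exact congrArg g (rfl)
            right_inv := fun f => by ext x; rfl }, fun g => rfl⟩
end

section
/- Let K be a field, Λ a finite-dimensional K-algebra, and let U and U' be nonzero finite-dimensional uniserial left Λ-modules with dim_K U = dim_K U', such that U is not isomorphic to U' and the quotients U/soc(U) and U'/soc(U') are isomorphic. Then dim_K Hom_Λ(U', U) = dim_K Hom_Λ(U/soc(U), U) and consequently dim_K Hom_Λ(U', U) < dim_K Hom_Λ(U, U). -/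
/-!
By dimension count, an injective map `U' → U` would be an isomorphism, so every map `U' → U`
has a nonzero kernel, which contains `soc U'` because `U'` is uniserial. Hence
`Hom(U', U) = Hom(U' ⧸ soc U', U) ≅ Hom(U ⧸ soc U, U)`. Composing with `U → U ⧸ soc U` embeds the
latter into `End U`, and not onto: `id` does not factor through it since `soc U ≠ 0`.
-/

open Module

section Socle

variable {Λ M : Type*} [Ring Λ] [AddCommGroup M] [Module Λ M]

theorem Module.socle_ne_bot [IsArtinian Λ M] [Nontrivial M] : socle Λ M ≠ ⊥ := by
  obtain ⟨S, hS⟩ := IsAtomic.exists_atom (Submodule Λ M)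
  have hS_le : S ≤ socle Λ M := le_sSup (isSimpleModule_iff_isAtom.2 hS)
  exact fun h => hS.1 (le_bot_iff.1 (h ▸ hS_le))

theorem IsUniserialModule.socle_le (hM : IsUniserialModule Λ M) {N : Submodule Λ M}
    (hN : N ≠ ⊥) : socle Λ M ≤ N := by
  refine sSup_le fun S hS => ?_
  rcases hM S N with hSN | hNS
  · exact hSN
  · rcases (isSimpleModule_iff_isAtom.1 hS).le_iff.1 hNS with h | h
    · exact absurd h hN
    · exact h.ge

end Socle

section HomSpaces

variable (K : Type*) {Λ M P : Type*} [Field K] [Ring Λ] [Algebra K Λ]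
  [AddCommGroup M] [Module Λ M] [AddCommGroup P] [Module K P] [Module Λ P] [IsScalarTower K Λ P]

theorem LinearMap.ker_ne_bot_of_isEmpty_linearEquiv [Module K M] [IsScalarTower K Λ M]
    [FiniteDimensional K M] [FiniteDimensional K P] (hdim : finrank K M = finrank K P)
    (hniso : IsEmpty (P ≃ₗ[Λ] M)) (φ : M →ₗ[Λ] P) : LinearMap.ker φ ≠ ⊥ := fun hker => by
  have hinj : Function.Injective φ := LinearMap.ker_eq_bot.1 hker
  have hsurj : Function.Surjective φ :=
    (LinearMap.injective_iff_surjective_of_finrank_eq_finrank hdim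
      (f := φ.restrictScalars K)).1 hinj
  exact hniso.false (LinearEquiv.ofBijective φ ⟨hinj, hsurj⟩).symm

theorem IsUniserialModule.socle_le_ker_of_isEmpty_linearEquiv (hM : IsUniserialModule Λ M)
    [Module K M] [IsScalarTower K Λ M] [FiniteDimensional K M] [FiniteDimensional K P]
    (hdim : finrank K M = finrank K P) (hniso : IsEmpty (P ≃ₗ[Λ] M)) (φ : M →ₗ[Λ] P) :
    socle Λ M ≤ LinearMap.ker φ :=
  hM.socle_le (LinearMap.ker_ne_bot_of_isEmpty_linearEquiv K hdim hniso φ)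

theorem finrank_linearMap_quotient_eq_of_forall_le_ker (N : Submodule Λ M)
    (hN : ∀ φ : M →ₗ[Λ] P, N ≤ LinearMap.ker φ) :
    finrank K ((M ⧸ N) →ₗ[Λ] P) = finrank K (M →ₗ[Λ] P) :=
  (LinearEquiv.ofBijective (LinearMap.lcomp K P N.mkQ)
    ⟨LinearMap.lcomp_injective_of_surjective _ N.mkQ_surjective,
      fun φ => ⟨N.liftQ φ (hN φ), N.liftQ_mkQ φ (hN φ)⟩⟩).finrank_eq

theorem finrank_linearMap_quotient_lt [Module K M] [IsScalarTower K Λ M] [FiniteDimensional K M]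
    {N : Submodule Λ M} (hN : N ≠ ⊥) : finrank K ((M ⧸ N) →ₗ[Λ] M) < finrank K (M →ₗ[Λ] M) := by
  set Ψ := LinearMap.lcomp K M N.mkQ
  have hΨ : Function.Injective Ψ := LinearMap.lcomp_injective_of_surjective _ N.mkQ_surjective
  have hid : LinearMap.id ∉ LinearMap.range Ψ := by
    rintro ⟨g, hg⟩
    have hgN : ∀ x, g (N.mkQ x) = x := LinearMap.congr_fun hg
    refine hN (N.ker_mkQ ▸ LinearMap.ker_eq_bot_of_injective fun x y hxy => ?_)
    exact (hgN x).symm.trans ((congrArg g hxy).trans (hgN y))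
  calc finrank K ((M ⧸ N) →ₗ[Λ] M)
      = finrank K (LinearMap.range Ψ) := (LinearMap.finrank_range_of_inj hΨ).symm
    _ < finrank K (M →ₗ[Λ] M) := Submodule.finrank_lt fun h => hid (h ▸ Submodule.mem_top)

end HomSpaces

theorem hom_dim_eq_and_lt_of_quotients_iso_general
    (K Λ : Type*) [Field K] [Ring Λ] [Algebra K Λ]
    (U : Type*) [AddCommGroup U] [Module K U] [Module Λ U] [IsScalarTower K Λ U]
    [FiniteDimensional K U] [Nontrivial U]
    (U' : Type*) [AddCommGroup U'] [Module K U'] [Module Λ U'] [IsScalarTower K Λ U']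
    [FiniteDimensional K U'] (hU' : IsUniserialModule Λ U')
    (hdim : Module.finrank K U = Module.finrank K U')
    (hniso : IsEmpty (U ≃ₗ[Λ] U'))
    (hquot : Nonempty ((U ⧸ Module.socle Λ U) ≃ₗ[Λ] (U' ⧸ Module.socle Λ U'))) :
    Module.finrank K (U' →ₗ[Λ] U) =
      Module.finrank K ((U ⧸ Module.socle Λ U) →ₗ[Λ] U) ∧
    Module.finrank K (U' →ₗ[Λ] U) < Module.finrank K (U →ₗ[Λ] U) := by
  obtain ⟨e⟩ := hquot
  have : IsArtinian Λ U := isArtinian_of_tower K inferInstance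
  have heq : finrank K (U' →ₗ[Λ] U) = finrank K ((U ⧸ socle Λ U) →ₗ[Λ] U) :=
    calc finrank K (U' →ₗ[Λ] U)
        = finrank K ((U' ⧸ socle Λ U') →ₗ[Λ] U) :=
          (finrank_linearMap_quotient_eq_of_forall_le_ker K _
            (hU'.socle_le_ker_of_isEmpty_linearEquiv K hdim.symm hniso)).symm
      _ = finrank K ((U ⧸ socle Λ U) →ₗ[Λ] U) := (LinearEquiv.congrLeft U K e).finrank_eq.symm
  exact ⟨heq, heq ▸ finrank_linearMap_quotient_lt K socle_ne_bot⟩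

/-- Let `U` and `U'` be nonzero finite-dimensional uniserial left
`Λ`-modules of the same `K`-dimension, with `U` not isomorphic to `U'` and
`U/soc U ≅ U'/soc U'`.  Then `dim_K Hom_Λ(U', U) = dim_K Hom_Λ(U/soc U, U)` and
consequently `dim_K Hom_Λ(U', U) < dim_K Hom_Λ(U, U)`. -/
theorem hom_dim_eq_and_lt_of_quotients_iso
    (K Λ : Type*) [Field K] [Ring Λ] [Algebra K Λ] [FiniteDimensional K Λ]
    (U : Type*) [AddCommGroup U] [Module K U] [Module Λ U] [IsScalarTower K Λ U]
    [FiniteDimensional K U] [Nontrivial U] (hU : IsUniserialModule Λ U)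
    (U' : Type*) [AddCommGroup U'] [Module K U'] [Module Λ U'] [IsScalarTower K Λ U']
    [FiniteDimensional K U'] [Nontrivial U'] (hU' : IsUniserialModule Λ U')
    (hdim : Module.finrank K U = Module.finrank K U')
    (hniso : IsEmpty (U ≃ₗ[Λ] U'))
    (hquot : Nonempty ((U ⧸ Module.socle Λ U) ≃ₗ[Λ] (U' ⧸ Module.socle Λ U'))) :
    Module.finrank K (U' →ₗ[Λ] U) =
      Module.finrank K ((U ⧸ Module.socle Λ U) →ₗ[Λ] U) ∧
    Module.finrank K (U' →ₗ[Λ] U) < Module.finrank K (U →ₗ[Λ] U) :=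
  hom_dim_eq_and_lt_of_quotients_iso_general K Λ U U' hU' hdim hniso hquot
end
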